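/- arXiv:2107.04088 — 2 statements merged into one kernel-verified Lean document; each statement's English description precedes it below -/
import Mathlib

section
/- Let Q be a nonzero symmetric n×n real matrix satisfying Tr(Q)·Q − Q² ⪰ 0 (positive semidefinite). Then Q ⪰ 0 or Q ⪯ 0. -/
/-!
By the continuous functional calculus, `c • a - a * a = f(a)` with `f x = c x - x²`, so
`f(a) ≥ 0` says `x (c - x) ≥ 0` on the spectrum of `a`. A negative spectral value `x` then forces
`c ≤ x < 0` and a positive one `y` forces `0 < y ≤ c`, so the spectrum cannot contain both.
-/

lemma forall_nonneg_or_forall_nonpos_of_mul_sub_mul_self_nonneg {s : Set ℝ} {c : ℝ}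
    (h : ∀ x ∈ s, 0 ≤ c * x - x * x) : (∀ x ∈ s, 0 ≤ x) ∨ ∀ x ∈ s, x ≤ 0 := by
  by_contra! ⟨⟨x, hxs, hx⟩, y, hys, hy⟩
  have hcx : c ≤ x := by nlinarith [h x hxs]
  have hyc : y ≤ c := by nlinarith [h y hys]
  linarith

section CStarAlgebra

variable {A : Type*} [Ring A] [StarRing A] [PartialOrder A] [StarOrderedRing A]
  [TopologicalSpace A] [Algebra ℝ A] [ContinuousFunctionalCalculus ℝ A IsSelfAdjoint]
  [NonnegSpectrumClass ℝ A]

theorem IsSelfAdjoint.nonneg_or_nonpos_of_smul_sub_mul_self_nonneg {a : A}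
    (ha : IsSelfAdjoint a) {c : ℝ} (h : 0 ≤ c • a - a * a) : 0 ≤ a ∨ a ≤ 0 := by
  have hcfc : c • a - a * a = cfc (fun x ↦ c * x - x * x) a := by
    rw [cfc_sub .., cfc_const_mul .., cfc_mul .., cfc_id' ℝ a]
  rw [hcfc, cfc_nonneg_iff _ a] at h
  rw [StarOrderedRing.nonneg_iff_spectrum_nonneg (R := ℝ) a, ← map_zero (algebraMap ℝ A),
    le_algebraMap_iff_spectrum_le]
  exact forall_nonneg_or_forall_nonpos_of_mul_sub_mul_self_nonneg h

end CStarAlgebra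

open Matrix in
theorem posSemidef_or_negSemidef_of_trace_smul_sub_sq_posSemidef_general
    {n : ℕ} (Q : Matrix (Fin n) (Fin n) ℝ) (hQsymm : Q.IsSymm)
    (h : (Q.trace • Q - Q * Q).PosSemidef) :
    Q.PosSemidef ∨ (-Q).PosSemidef := by
  have hQ : IsSelfAdjoint Q := isHermitian_iff_isSymm.mpr hQsymm
  open scoped MatrixOrder in
  simpa only [nonneg_iff_posSemidef, ← neg_nonneg (a := Q)] using
    hQ.nonneg_or_nonpos_of_smul_sub_mul_self_nonneg h.nonneg

/-- if a nonzero symmetric real matrix `Q` satisfies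
`Tr(Q)·Q − Q² ⪰ 0`, then `Q ⪰ 0` or `Q ⪯ 0`. -/
theorem posSemidef_or_negSemidef_of_trace_smul_sub_sq_posSemidef
    {n : ℕ} (Q : Matrix (Fin n) (Fin n) ℝ) (hQsymm : Q.IsSymm) (hQne : Q ≠ 0)
    (h : (Q.trace • Q - Q * Q).PosSemidef) :
    Q.PosSemidef ∨ (-Q).PosSemidef :=
  posSemidef_or_negSemidef_of_trace_smul_sub_sq_posSemidef_general Q hQsymm h
end

section
/- Let ν be a probability measure on symmetric n×n matrices of the form ν = Σ_{i=1}^N θ_i δ_{Q_i} + θ_0 μ, where θ_i ≥ 0, θ_0 = 1 − Σθ_i > 0, μ is a probability measure supported on {X symmetric : Tr(X) = p_0} with θ_0 p_0 = −Σ_{i=1}^N θ_i Tr(Q_i), the barycenter of ν is 0, and ∫ (Tr(X)X − X²) dν(X) = 0. Then Σ_{i=1}^N [θ_0 Tr(Q_i) + Σ_{j=1}^N θ_j Tr(Q_j)] θ_i Q_i ⪰ θ_0 Σ_{i=1}^N θ_i Q_i² + (Σ_{i=1}^N θ_i Q_i)². -/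
/-!
Write `A = ∫ X dμ` and `B = ∫ X² dμ`. Splitting `ν` into its atoms and `θ₀ μ`, the barycenter
condition reads `Σ θᵢ Qᵢ = -θ₀ A`, and since `Tr X = p₀` holds `μ`-a.e., the null-Lagrangian
condition reads `Σ θᵢ (Tr Qᵢ Qᵢ - Qᵢ²) = θ₀ (B - p₀ A)`. Together with `θ₀ p₀ = -Σ θᵢ Tr Qᵢ`
these turn the difference of the two sides into `θ₀² (B - A²)`, which is positive semidefinite by
Jensen's inequality: for symmetric `X`, `vᵀ (B - A²) v = ∫ |X v|² dμ - |∫ X v dμ|² ≥ 0`.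
-/

open MeasureTheory Matrix

instance matrixMeasurableSpace {d : ℕ} : MeasurableSpace (Matrix (Fin d) (Fin d) ℝ) :=
  inferInstanceAs (MeasurableSpace (Fin d → Fin d → ℝ))

instance matrixMeasurableSingletonClass {d : ℕ} :
    MeasurableSingletonClass (Matrix (Fin d) (Fin d) ℝ) :=
  inferInstanceAs (MeasurableSingletonClass (Fin d → Fin d → ℝ))

namespace Matrix

variable {n R : Type*} [Fintype n]

theorem IsSymm.mul_self [CommSemiring R] {M : Matrix n n R} (hM : M.IsSymm) : (M * M).IsSymm := by
  rw [IsSymm, transpose_mul, hM.eq]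

theorem IsSymm.dotProduct_mul_self_mulVec [CommSemiring R] {M : Matrix n n R} (hM : M.IsSymm)
    (v : n → R) :
    v ⬝ᵥ (M * M) *ᵥ v = (M *ᵥ v) ⬝ᵥ (M *ᵥ v) := by
  rw [← mulVec_mulVec, dotProduct_mulVec, ← mulVec_transpose, hM.eq]

theorem sum_trace_smul_sub_eq_of_moments [CommRing R] {ι : Type*} [Fintype ι] (θ : ι → R)
    (θ₀ p₀ : R) (Q : ι → Matrix n n R) (A B : Matrix n n R)
    (hp₀ : θ₀ * p₀ = -∑ i, θ i * (Q i).trace)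
    (hbary : ∑ i, θ i • Q i + θ₀ • A = 0)
    (hnull : ∑ i, θ i • ((Q i).trace • Q i - Q i * Q i) + θ₀ • (p₀ • A - B) = 0) :
    (∑ i, ((θ₀ * (Q i).trace + ∑ j, θ j * (Q j).trace) * θ i) • Q i)
      - (θ₀ • ∑ i, θ i • (Q i * Q i) + (∑ i, θ i • Q i) * (∑ i, θ i • Q i))
      = θ₀ ^ 2 • (B - A * A) := by
  have hS : ∑ i, θ i • Q i = -θ₀ • A := by rw [neg_smul, eq_neg_iff_add_eq_zero, hbary]
  have hsplit : ∑ i, ((θ₀ * (Q i).trace + ∑ j, θ j * (Q j).trace) * θ i) • Q i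
      = θ₀ • ∑ i, θ i • ((Q i).trace • Q i) + (∑ j, θ j * (Q j).trace) • ∑ i, θ i • Q i := by
    simp only [Finset.smul_sum, ← Finset.sum_add_distrib, smul_smul]
    exact Finset.sum_congr rfl fun i _ => by module
  simp only [smul_sub, Finset.sum_sub_distrib] at hnull
  rw [hsplit, hS, smul_mul_smul_comm]
  linear_combination (norm := module) θ₀ • hnull - (θ₀ * hp₀) • A

end Matrix

section Jensen

variable {α : Type*} [MeasurableSpace α] {μ : Measure α} [IsProbabilityMeasure μ]

theorem sq_integral_le_integral_sq {g : α → ℝ} (hg : AEStronglyMeasurable g μ)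
    (hg2 : Integrable (fun x => g x ^ 2) μ) : (∫ x, g x ∂μ) ^ 2 ≤ ∫ x, g x ^ 2 ∂μ := by
  have := ProbabilityTheory.variance_eq_sub ((memLp_two_iff_integrable_sq hg).2 hg2) ▸
    ProbabilityTheory.variance_nonneg g μ
  simpa using this

theorem dotProduct_self_integral_le {ι : Type*} [Fintype ι] {g : α → ι → ℝ}
    (hg : ∀ i, AEStronglyMeasurable (fun x => g x i) μ)
    (hg2 : Integrable (fun x => g x ⬝ᵥ g x) μ) :
    (fun i => ∫ x, g x i ∂μ) ⬝ᵥ (fun i => ∫ x, g x i ∂μ) ≤ ∫ x, g x ⬝ᵥ g x ∂μ := by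
  simp only [dotProduct, ← sq] at hg2 ⊢
  have hgi2 (i : ι) : Integrable (fun x => g x i ^ 2) μ :=
    hg2.mono' ((hg i).pow 2) <| ae_of_all _ fun x => by
      simpa using Finset.single_le_sum (fun j _ => sq_nonneg (g x j)) (Finset.mem_univ i)
  rw [integral_finsetSum _ fun i _ => hgi2 i]
  exact Finset.sum_le_sum fun i _ => sq_integral_le_integral_sq (hg i) (hgi2 i)

end Jensen

section EntrywiseIntegral

variable {α : Type*} [MeasurableSpace α] {μ : Measure α} {m n : Type*}

noncomputable def entrywiseIntegral (μ : Measure α) (F : α → Matrix m n ℝ) : Matrix m n ℝ :=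
  Matrix.of fun a b => ∫ x, F x a b ∂μ

@[simp]
theorem entrywiseIntegral_apply (F : α → Matrix m n ℝ) (a : m) (b : n) :
    entrywiseIntegral μ F a b = ∫ x, F x a b ∂μ :=
  rfl

theorem entrywiseIntegral_congr_ae {F G : α → Matrix m n ℝ} (h : F =ᵐ[μ] G) :
    entrywiseIntegral μ F = entrywiseIntegral μ G := by
  ext a b
  exact integral_congr_ae (h.mono fun x hx => congr_fun₂ hx a b)

theorem entrywiseIntegral_sub {F G : α → Matrix m n ℝ}
    (hF : ∀ a b, Integrable (fun x => F x a b) μ) (hG : ∀ a b, Integrable (fun x => G x a b) μ) :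
    entrywiseIntegral μ (fun x => F x - G x) = entrywiseIntegral μ F - entrywiseIntegral μ G := by
  ext a b
  exact integral_sub (hF a b) (hG a b)

theorem entrywiseIntegral_smul (c : ℝ) (F : α → Matrix m n ℝ) :
    entrywiseIntegral μ (fun x => c • F x) = c • entrywiseIntegral μ F := by
  ext a b
  exact integral_const_mul c _

theorem isSymm_entrywiseIntegral {F : α → Matrix m m ℝ} (h : ∀ᵐ x ∂μ, (F x).IsSymm) :
    (entrywiseIntegral μ F).IsSymm := by
  ext a b
  exact integral_congr_ae (h.mono fun x hx => hx.apply a b)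

variable [Fintype n]

theorem integrable_mulVec_apply {F : α → Matrix m n ℝ}
    (hF : ∀ a b, Integrable (fun x => F x a b) μ) (v : n → ℝ) (a : m) :
    Integrable (fun x => (F x *ᵥ v) a) μ :=
  integrable_finsetSum _ fun b _ => (hF a b).mul_const (v b)

theorem entrywiseIntegral_mulVec {F : α → Matrix m n ℝ}
    (hF : ∀ a b, Integrable (fun x => F x a b) μ) (v : n → ℝ) :
    entrywiseIntegral μ F *ᵥ v = fun a => ∫ x, (F x *ᵥ v) a ∂μ := by
  ext a
  simp only [mulVec, dotProduct, entrywiseIntegral_apply]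
  rw [integral_finsetSum _ fun b _ => (hF a b).mul_const (v b)]
  simp only [integral_mul_const]

variable [Fintype m]

theorem integrable_dotProduct_mulVec {F : α → Matrix m n ℝ}
    (hF : ∀ a b, Integrable (fun x => F x a b) μ) (u : m → ℝ) (v : n → ℝ) :
    Integrable (fun x => u ⬝ᵥ F x *ᵥ v) μ :=
  integrable_finsetSum _ fun a _ => (integrable_mulVec_apply hF v a).const_mul (u a)

theorem dotProduct_entrywiseIntegral_mulVec {F : α → Matrix m n ℝ}
    (hF : ∀ a b, Integrable (fun x => F x a b) μ) (u : m → ℝ) (v : n → ℝ) :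
    u ⬝ᵥ entrywiseIntegral μ F *ᵥ v = ∫ x, u ⬝ᵥ F x *ᵥ v ∂μ := by
  simp only [entrywiseIntegral_mulVec hF, dotProduct]
  rw [integral_finsetSum _ fun a _ => (integrable_mulVec_apply hF v a).const_mul (u a)]
  simp only [integral_const_mul]

theorem posSemidef_entrywiseIntegral_mul_self_sub [IsProbabilityMeasure μ]
    {F : α → Matrix m m ℝ} (hsymm : ∀ᵐ x ∂μ, (F x).IsSymm)
    (hF : ∀ a b, Integrable (fun x => F x a b) μ)
    (hF2 : ∀ a b, Integrable (fun x => (F x * F x) a b) μ) :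
    (entrywiseIntegral μ (fun x => F x * F x)
      - entrywiseIntegral μ F * entrywiseIntegral μ F).PosSemidef := by
  have hA := isSymm_entrywiseIntegral hsymm
  have hB := isSymm_entrywiseIntegral (hsymm.mono fun x hx => hx.mul_self)
  refine posSemidef_iff_dotProduct_mulVec.2
    ⟨isHermitian_iff_isSymm.2 (hB.sub hA.mul_self), fun v => ?_⟩
  have hsq : (fun x => v ⬝ᵥ (F x * F x) *ᵥ v) =ᵐ[μ] fun x => (F x *ᵥ v) ⬝ᵥ (F x *ᵥ v) :=
    hsymm.mono fun x hx => hx.dotProduct_mul_self_mulVec v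
  rw [star_trivial, sub_mulVec, dotProduct_sub, hA.dotProduct_mul_self_mulVec,
    dotProduct_entrywiseIntegral_mulVec hF2, integral_congr_ae hsq,
    entrywiseIntegral_mulVec hF, sub_nonneg]
  exact dotProduct_self_integral_le
    (fun a => (integrable_mulVec_apply hF v a).aestronglyMeasurable)
    ((integrable_dotProduct_mulVec hF2 v v).congr hsq)

end EntrywiseIntegral

section DiracMixture

variable {α : Type*} [MeasurableSpace α] [MeasurableSingletonClass α] {ι : Type*} [Fintype ι]
  (μ : Measure α) {θ : ι → ℝ} {θ₀ : ℝ} (Q : ι → α)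

theorem integral_sum_dirac_add_smul {E : Type*} [NormedAddCommGroup E] [NormedSpace ℝ E]
    [CompleteSpace E] (hθ : ∀ i, 0 ≤ θ i) (hθ₀ : 0 ≤ θ₀) {f : α → E} (hf : Integrable f μ) :
    ∫ x, f x ∂(∑ i, ENNReal.ofReal (θ i) • Measure.dirac (Q i) + ENNReal.ofReal θ₀ • μ)
      = ∑ i, θ i • f (Q i) + θ₀ • ∫ x, f x ∂μ := by
  have hdirac (i : ι) : Integrable f (ENNReal.ofReal (θ i) • Measure.dirac (Q i)) :=
    (integrable_dirac enorm_lt_top).smul_measure ENNReal.ofReal_ne_top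
  rw [integral_add_measure (integrable_finsetSum_measure.2 fun i _ => hdirac i)
      (hf.smul_measure ENNReal.ofReal_ne_top),
    integral_finsetSum_measure fun i _ => hdirac i, integral_smul_measure,
    ENNReal.toReal_ofReal hθ₀]
  simp only [integral_smul_measure, integral_dirac, ENNReal.toReal_ofReal (hθ _)]

theorem entrywiseIntegral_sum_dirac_add_smul {m n : Type*} (hθ : ∀ i, 0 ≤ θ i) (hθ₀ : 0 ≤ θ₀)
    {F : α → Matrix m n ℝ} (hF : ∀ a b, Integrable (fun x => F x a b) μ) :
    entrywiseIntegral (∑ i, ENNReal.ofReal (θ i) • Measure.dirac (Q i) + ENNReal.ofReal θ₀ • μ) F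
      = ∑ i, θ i • F (Q i) + θ₀ • entrywiseIntegral μ F := by
  ext a b
  simp [integral_sum_dirac_add_smul μ Q hθ hθ₀ (hF a b), Matrix.sum_apply]

end DiracMixture

theorem sequential_E_inclusion_restriction_general
    {d N : ℕ} (μ : Measure (Matrix (Fin d) (Fin d) ℝ)) [IsProbabilityMeasure μ]
    (θ : Fin N → ℝ) (θ₀ p₀ : ℝ)
    (hθ : ∀ i, 0 ≤ θ i) (hθ₀pos : 0 < θ₀)
    (Q : Fin N → Matrix (Fin d) (Fin d) ℝ)
    (hp₀ : θ₀ * p₀ = -∑ i, θ i * (Q i).trace)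
    (hsupp : ∀ᵐ X ∂μ, X.IsSymm ∧ X.trace = p₀)
    (ν : Measure (Matrix (Fin d) (Fin d) ℝ))
    (hν : ν = (∑ i, ENNReal.ofReal (θ i) • Measure.dirac (Q i))
        + ENNReal.ofReal θ₀ • μ)
    (hint1 : ∀ i j : Fin d, Integrable (fun X => X i j) ν)
    (hint2 : ∀ i j : Fin d, Integrable (fun X => (X * X) i j) ν)
    (hbary : ∀ i j : Fin d, ∫ X, X i j ∂ν = 0)
    (hnull : ∀ i j : Fin d, ∫ X, (X.trace * X i j - (X * X) i j) ∂ν = 0) :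
    ((∑ i, ((θ₀ * (Q i).trace + ∑ j, θ j * (Q j).trace) * θ i) • Q i)
      - (θ₀ • ∑ i, θ i • (Q i * Q i) + (∑ i, θ i • Q i) * (∑ i, θ i • Q i))).PosSemidef := by
  have hμ {f : Matrix (Fin d) (Fin d) ℝ → ℝ} (hf : Integrable f ν) : Integrable f μ :=
    (integrable_smul_measure (ENNReal.ofReal_pos.2 hθ₀pos).ne' ENNReal.ofReal_ne_top).1
      ((hν ▸ hf).mono_measure (Measure.le_add_left le_rfl))
  have hint1μ (a b : Fin d) := hμ (hint1 a b)
  have hint2μ (a b : Fin d) := hμ (hint2 a b)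
  have htrace : (fun X : Matrix (Fin d) (Fin d) ℝ => X.trace • X) =ᵐ[μ] fun X => p₀ • X :=
    hsupp.mono fun X hX => show X.trace • X = p₀ • X by rw [hX.2]
  have hint_trace (a b : Fin d) : Integrable (fun X : Matrix _ _ ℝ => (X.trace • X) a b) μ :=
    ((hint1μ a b).const_mul p₀).congr (htrace.mono fun X hX => (congr_fun₂ hX a b).symm)
  have hbary' : entrywiseIntegral ν (fun X => X) = 0 := by
    ext a b
    exact hbary a b
  have hnull' : entrywiseIntegral ν (fun X => X.trace • X - X * X) = 0 := by
    ext a b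
    simpa using hnull a b
  rw [hν, entrywiseIntegral_sum_dirac_add_smul μ Q hθ hθ₀pos.le hint1μ] at hbary'
  rw [hν, entrywiseIntegral_sum_dirac_add_smul μ Q hθ hθ₀pos.le
      (F := fun X => X.trace • X - X * X) fun a b => (hint_trace a b).sub (hint2μ a b),
    entrywiseIntegral_sub hint_trace hint2μ, entrywiseIntegral_congr_ae htrace,
    entrywiseIntegral_smul] at hnull'
  rw [sum_trace_smul_sub_eq_of_moments θ θ₀ p₀ Q _ _ hp₀ hbary' hnull']
  exact (posSemidef_entrywiseIntegral_mul_self_sub (hsupp.mono fun X hX => hX.1)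
    hint1μ hint2μ).smul (sq_nonneg θ₀)

/-- for a Young-measure-type probability measure
`ν = Σ θ_i δ_{Q_i} + θ₀ μ` on symmetric matrices with zero barycenter,
`μ` supported on `{Tr X = p₀}` where `θ₀ p₀ = −Σ θ_i Tr Q_i`, and with vanishing
second moment of the null Lagrangian `Tr(X)X − X²`, the matrix inequality
`Σ_i [θ₀ Tr Q_i + Σ_j θ_j Tr Q_j] θ_i Q_i ⪰ θ₀ Σ_i θ_i Q_i² + (Σ_i θ_i Q_i)²` holds. -/
theorem sequential_E_inclusion_restriction
    {d N : ℕ} (μ : Measure (Matrix (Fin d) (Fin d) ℝ)) [IsProbabilityMeasure μ]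
    (θ : Fin N → ℝ) (θ₀ p₀ : ℝ)
    (hθ : ∀ i, 0 ≤ θ i) (hθ₀ : θ₀ = 1 - ∑ i, θ i) (hθ₀pos : 0 < θ₀)
    (Q : Fin N → Matrix (Fin d) (Fin d) ℝ) (hQsymm : ∀ i, (Q i).IsSymm)
    (hp₀ : θ₀ * p₀ = -∑ i, θ i * (Q i).trace)
    (hsupp : ∀ᵐ X ∂μ, X.IsSymm ∧ X.trace = p₀)
    (ν : Measure (Matrix (Fin d) (Fin d) ℝ))
    (hν : ν = (∑ i, ENNReal.ofReal (θ i) • Measure.dirac (Q i))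
        + ENNReal.ofReal θ₀ • μ)
    (hint1 : ∀ i j : Fin d, Integrable (fun X => X i j) ν)
    (hint2 : ∀ i j : Fin d, Integrable (fun X => (X * X) i j) ν)
    (hbary : ∀ i j : Fin d, ∫ X, X i j ∂ν = 0)
    (hnull : ∀ i j : Fin d, ∫ X, (X.trace * X i j - (X * X) i j) ∂ν = 0) :
    ((∑ i, ((θ₀ * (Q i).trace + ∑ j, θ j * (Q j).trace) * θ i) • Q i)
      - (θ₀ • ∑ i, θ i • (Q i * Q i) + (∑ i, θ i • Q i) * (∑ i, θ i • Q i))).PosSemidef :=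
  sequential_E_inclusion_restriction_general μ θ θ₀ p₀ hθ hθ₀pos Q hp₀ hsupp ν hν hint1 hint2 hbary
    hnull
end
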